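/- Let m, b, k : ℝ with 0 < m, 0 < b, 0 < k, let g : ℝ → ℝ be arbitrary, and let X, Y : ℝ → ℝ both solve the damped oscillator equation with forcing g. Then Filter.Tendsto (fun t => X t - Y t) Filter.atTop (nhds 0); i.e., the asymptotic dynamics of the damped oscillator are independent of initial conditions. -/

import Mathlib

/-!
The difference of two solutions solves the unforced equation `m u'' + b u' + k u = 0`. Along such
a solution the energy `m u'² + k u²` dissipates only at rate `2 b u'²`, which does not control `u²`.
Adding the small cross term `ε (2 m u u' + b u²)` gives a Lyapunov function `V`, comparable to
`u² + u'²`, with `V' ≤ -c V`; hence `V`, and with it `u`, decays exponentially.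
-/

open Filter Real

/-- `X` solves the damped oscillator equation `m ẍ + b ẋ + k x = g` with forcing `g`:
`X` is twice differentiable and the equation holds at every time `t`. -/
def SolvesDampedOsc (m b k : ℝ) (g : ℝ → ℝ) (X : ℝ → ℝ) : Prop :=
  Differentiable ℝ X ∧ Differentiable ℝ (deriv X) ∧
    ∀ t : ℝ, m * deriv (deriv X) t + b * deriv X t + k * X t = g t

open Topology

theorem le_mul_exp_neg_of_hasDerivAt_le {f f' : ℝ → ℝ} {c : ℝ}
    (hf : ∀ t, HasDerivAt f (f' t) t) (hle : ∀ t, f' t ≤ -c * f t) {t : ℝ} (ht : 0 ≤ t) :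
    f t ≤ f 0 * exp (-c * t) := by
  have hW : ∀ s, HasDerivAt (fun s => f s * exp (c * s)) ((f' s + c * f s) * exp (c * s)) s := by
    intro s
    have hexp : HasDerivAt (fun s => exp (c * s)) (exp (c * s) * c) s := by
      simpa using ((hasDerivAt_id s).const_mul c).exp
    exact ((hf s).mul hexp).congr_deriv (by ring)
  have hanti : Antitone fun s => f s * exp (c * s) :=
    antitone_of_hasDerivAt_nonpos hW fun s =>
      mul_nonpos_of_nonpos_of_nonneg (by linarith [hle s]) (exp_pos _).le
  rw [neg_mul, exp_neg, ← div_eq_mul_inv, le_div_iff₀ (exp_pos _)]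
  simpa using hanti ht

def dampedOscLyapunov (m b k ε x v : ℝ) : ℝ :=
  m * v ^ 2 + k * x ^ 2 + ε * (2 * m * x * v + b * x ^ 2)

section Lyapunov

variable {m b k ε : ℝ}

theorem sq_le_dampedOscLyapunov (hm : 0 ≤ m) (hb : 0 ≤ b) (hε : 0 ≤ ε) (hε₁ : ε ≤ 1)
    (hεk : ε * m ≤ k / 2) (x v : ℝ) : k / 2 * x ^ 2 ≤ dampedOscLyapunov m b k ε x v := by
  unfold dampedOscLyapunov
  nlinarith [mul_nonneg (mul_nonneg hε hm) (sq_nonneg (x + v)),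
    mul_nonneg (mul_nonneg hε hb) (sq_nonneg x),
    mul_nonneg (mul_nonneg (sub_nonneg.2 hε₁) hm) (sq_nonneg v),
    mul_nonneg (sub_nonneg.2 hεk) (sq_nonneg x)]

theorem exists_pos_dissipation_le_neg_mul_dampedOscLyapunov (hm : 0 < m) (hb : 0 < b)
    (hk : 0 < k) (hε : 0 < ε) (hεb : ε * m ≤ b / 2) :
    ∃ c > 0, ∀ x v, (2 * ε * m - 2 * b) * v ^ 2 - 2 * ε * k * x ^ 2 ≤
      -c * dampedOscLyapunov m b k ε x v := by
  set A := (1 + ε) * m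
  set B := k + ε * m + ε * b
  have hA : 0 < A := by positivity
  have hB : 0 < B := by positivity
  refine ⟨min (b / A) (2 * ε * k / B), by positivity, fun x v => ?_⟩
  set c := min (b / A) (2 * ε * k / B)
  have hcA : c * A ≤ b := (le_div_iff₀ hA).1 (min_le_left _ _)
  have hcB : c * B ≤ 2 * ε * k := (le_div_iff₀ hB).1 (min_le_right _ _)
  have hupper : dampedOscLyapunov m b k ε x v ≤ A * v ^ 2 + B * x ^ 2 := by
    unfold dampedOscLyapunov
    nlinarith [mul_nonneg (mul_nonneg hε.le hm.le) (sq_nonneg (x - v))]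
  nlinarith [mul_le_mul_of_nonneg_left hupper (by positivity : 0 ≤ c),
    mul_le_mul_of_nonneg_right hcA (sq_nonneg v), mul_le_mul_of_nonneg_right hcB (sq_nonneg x),
    sq_nonneg v]

end Lyapunov

namespace SolvesDampedOsc

variable {m b k : ℝ} {g h : ℝ → ℝ} {X Y u : ℝ → ℝ}

theorem sub (hX : SolvesDampedOsc m b k g X) (hY : SolvesDampedOsc m b k h Y) :
    SolvesDampedOsc m b k (g - h) (X - Y) := by
  obtain ⟨hX₁, hX₂, hXeq⟩ := hX
  obtain ⟨hY₁, hY₂, hYeq⟩ := hY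
  have hd : deriv (X - Y) = deriv X - deriv Y := funext fun t => deriv_sub (hX₁ t) (hY₁ t)
  have hdd : deriv (deriv (X - Y)) = deriv (deriv X) - deriv (deriv Y) := by
    rw [hd]; exact funext fun t => deriv_sub (hX₂ t) (hY₂ t)
  refine ⟨hX₁.sub hY₁, hd ▸ hX₂.sub hY₂, fun t => ?_⟩
  rw [hdd, hd]
  simp only [Pi.sub_apply]
  linear_combination hXeq t - hYeq t

theorem hasDerivAt_dampedOscLyapunov (hu : SolvesDampedOsc m b k 0 u) (ε t : ℝ) :
    HasDerivAt (fun t => dampedOscLyapunov m b k ε (u t) (deriv u t))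
      ((2 * ε * m - 2 * b) * deriv u t ^ 2 - 2 * ε * k * u t ^ 2) t := by
  obtain ⟨hu₁, hu₂, hueq⟩ := hu
  have hx := (hu₁ t).hasDerivAt
  have hv := (hu₂ t).hasDerivAt
  have hV := (((hv.pow 2).const_mul m).add ((hx.pow 2).const_mul k)).add
    ((((hx.const_mul (2 * m)).mul hv).add ((hx.pow 2).const_mul b)).const_mul ε)
  have heq : m * deriv (deriv u) t + b * deriv u t + k * u t = 0 := hueq t
  refine hV.congr_deriv ?_
  linear_combination (2 * deriv u t + 2 * ε * u t) * heq

theorem tendsto_atTop_zero (hu : SolvesDampedOsc m b k 0 u) (hm : 0 < m) (hb : 0 < b)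
    (hk : 0 < k) : Tendsto u atTop (𝓝 0) := by
  obtain ⟨ε, hε, hε₁, hεk, hεb⟩ : ∃ ε : ℝ, 0 < ε ∧ ε ≤ 1 ∧ ε * m ≤ k / 2 ∧ ε * m ≤ b / 2 := by
    have hδ : min 1 (min b k / (2 * m)) * m ≤ min b k / 2 :=
      calc _ ≤ min b k / (2 * m) * m := by gcongr; exact min_le_right _ _
        _ = min b k / 2 := by field_simp
    exact ⟨min 1 (min b k / (2 * m)), by positivity, min_le_left _ _,
      hδ.trans (by gcongr; exact min_le_right _ _), hδ.trans (by gcongr; exact min_le_left _ _)⟩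
  obtain ⟨c, hc, hdissip⟩ :=
    exists_pos_dissipation_le_neg_mul_dampedOscLyapunov hm hb hk hε hεb
  set V := fun t => dampedOscLyapunov m b k ε (u t) (deriv u t)
  have hdecay : ∀ t ≥ 0, V t ≤ V 0 * exp (-c * t) := fun t ht =>
    le_mul_exp_neg_of_hasDerivAt_le (hu.hasDerivAt_dampedOscLyapunov ε)
      (fun _ => hdissip _ _) ht
  have hbound : Tendsto (fun t => 2 / k * (V 0 * exp (-c * t))) atTop (𝓝 0) := by
    have := tendsto_exp_neg_atTop_nhds_zero.comp (tendsto_id.const_mul_atTop hc)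
    simpa [Function.comp_def, neg_mul] using (this.const_mul (V 0)).const_mul (2 / k)
  have hsq : Tendsto (fun t => u t ^ 2) atTop (𝓝 0) := by
    refine squeeze_zero' (.of_forall fun t => sq_nonneg _) ?_ hbound
    filter_upwards [eventually_ge_atTop 0] with t ht
    calc u t ^ 2 ≤ 2 / k * V t := by
          have := sq_le_dampedOscLyapunov hm.le hb.le hε.le hε₁ hεk (u t) (deriv u t)
          rw [div_mul_eq_mul_div, le_div_iff₀ hk]
          linarith
      _ ≤ 2 / k * (V 0 * exp (-c * t)) := by gcongr; exact hdecay t ht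
  refine (tendsto_zero_iff_abs_tendsto_zero u).2 ?_
  simpa [Function.comp_def, sqrt_sq_eq_abs] using hsq.sqrt

end SolvesDampedOsc

/-- The asymptotic dynamics of a forced damped oscillator are independent of initial
conditions: any two solutions with the same forcing agree asymptotically. -/
theorem damped_osc_asymptotics_independent_of_initial_conditions
    (m b k : ℝ) (hm : 0 < m) (hb : 0 < b) (hk : 0 < k) (g : ℝ → ℝ)
    (X Y : ℝ → ℝ) (hX : SolvesDampedOsc m b k g X) (hY : SolvesDampedOsc m b k g Y) :
    Tendsto (fun t => X t - Y t) atTop (nhds 0) := by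
  have hdiff : SolvesDampedOsc m b k 0 (X - Y) := sub_self g ▸ hX.sub hY
  exact hdiff.tendsto_atTop_zero hm hb hk
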